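/- Let k be an algebraically closed field of characteristic zero, A a finitely generated commutative k-algebra, G a finite group acting on A by k-algebra automorphisms, and E a cochain complex of finitely generated projective A-modules concentrated in degrees ≤ m (so E^j = 0 for j > m), with G-equivariant structures on the terms and G-equivariant differentials. Suppose that for every maximal ideal n of A and every integer j, H^j(E ⊗_A A/n) is generated as an A/n-module by G_n-fixed elements. Let E^G denote the cochain complex of A^G-modules whose terms are the invariants (E^j)^G with the restricted differentials. Then the canonical A-linear map A ⊗_{A^G} H^m(E^G) → H^m(E) is surjective. -/

import Mathlib

/-!
STATEMENT 16: over an algebraically closed field `k` of characteristic zero,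
let `G` be a finite group acting on a finitely generated commutative
`k`-algebra `A`, and let `E` be a `G`-equivariant cochain complex of finitely
generated projective `A`-modules concentrated in degrees `≤ m`.  If for every
maximal ideal `n` of `A` and every `j` the cohomology `H^j(E ⊗[A] A/n)` is
generated as an `A/n`-module by `G_n`-fixed elements, then the canonical map
`A ⊗[Aᴳ] H^m(Eᴳ) → H^m(E)` is surjective.

Conventions:
* `H^j(E ⊗[A] A/n)` is computed from the termwise fibers `E^j/nE^j` (the terms
  are flat); the hypothesis is expressed elementwise: every mod-`n` cocycle
  lies in the `A`-span of mod-`n` cocycles whose cohomology class mod `n` is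
  `G_n`-fixed.
* Since `E` is concentrated in degrees `≤ m`, `H^m(E) = E^m / im(d^{m-1})` and
  the image of the canonical map `A ⊗[Aᴳ] H^m(Eᴳ) → H^m(E)` is the `A`-span
  of the classes of `G`-invariant elements of `E^m`; its surjectivity is
  exactly the stated conclusion
  `span {G-invariants of E^m} ⊔ range(d^{m-1}) = ⊤`.
-/

open TensorProduct

universe u v w

/-- A (`ℤ`-indexed, cohomologically graded) cochain complex of `R`-modules,
with differentials indexed by pairs `(i, j)` with `i + 1 = j`. -/
structure ModComplex.{s, r} (R : Type s) [Ring R] : Type (max s (r + 1)) where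
  X : ℤ → Type r
  [acg : ∀ j, AddCommGroup (X j)]
  [mod : ∀ j, Module R (X j)]
  d : ∀ i j : ℤ, i + 1 = j → (X i →ₗ[R] X j)
  d_comp_d : ∀ (i j l : ℤ) (hij : i + 1 = j) (hjl : j + 1 = l) (x : X i),
    d j l hjl (d i j hij x) = 0

attribute [instance] ModComplex.acg ModComplex.mod

/-- A `G`-equivariant cochain complex of `A`-modules: each term carries a
`G`-action compatible with the `G`-action on `A`, and the differentials are
`G`-equivariant. -/
structure EqvModComplex.{s, t, r} (A : Type s) (G : Type t) [CommRing A]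
    [Group G] [MulSemiringAction G A] : Type (max s t (r + 1)) where
  X : ℤ → Type r
  [acg : ∀ j, AddCommGroup (X j)]
  [mod : ∀ j, Module A (X j)]
  [act : ∀ j, DistribMulAction G (X j)]
  equivariant : ∀ (j : ℤ) (g : G) (a : A) (x : X j),
    g • (a • x) = (g • a) • (g • x)
  d : ∀ i j : ℤ, i + 1 = j → (X i →ₗ[A] X j)
  d_comp_d : ∀ (i j l : ℤ) (hij : i + 1 = j) (hjl : j + 1 = l) (x : X i),
    d j l hjl (d i j hij x) = 0
  d_equivariant : ∀ (i j : ℤ) (h : i + 1 = j) (g : G) (x : X i),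
    d i j h (g • x) = g • d i j h x

attribute [instance] EqvModComplex.acg EqvModComplex.mod EqvModComplex.act



/-- Global Nakayama: a submodule of a finite module that is full modulo every
maximal ideal is the whole module. -/
theorem aux_eq_top_of_sup_smul {A : Type*} [CommRing A] {M : Type*} [AddCommGroup M]
    [Module A M] [Module.Finite A M] (N : Submodule A M)
    (h : ∀ n : Ideal A, n.IsMaximal → N ⊔ n • (⊤ : Submodule A M) = ⊤) : N = ⊤ := by
  by_contra hN
  have hann : Module.annihilator A (M ⧸ N) ≠ ⊤ := by
    intro hA
    apply hN
    rw [← Submodule.Quotient.subsingleton_iff]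
    refine ⟨fun a b => ?_⟩
    have ha := Module.mem_annihilator.mp
      (hA ▸ Submodule.mem_top : (1 : A) ∈ Module.annihilator A (M ⧸ N))
    calc a = (1 : A) • a := (one_smul A a).symm
      _ = 0 := ha a
      _ = (1 : A) • b := (ha b).symm
      _ = b := one_smul A b
  obtain ⟨n, hn, hle⟩ := Ideal.exists_le_maximal _ hann
  have htop : (⊤ : Submodule A (M ⧸ N)) ≤ n • ⊤ := by
    have hmap := congrArg (Submodule.map N.mkQ) (h n hn)
    rw [Submodule.map_sup, Submodule.map_smul'', Submodule.map_top, Submodule.range_mkQ]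
      at hmap
    have hmapN : Submodule.map N.mkQ N = ⊥ := by
      rw [eq_bot_iff]
      rintro x ⟨y, hy, rfl⟩
      simpa [Submodule.Quotient.mk_eq_zero] using hy
    rw [hmapN, bot_sup_eq] at hmap
    exact hmap.ge
  obtain ⟨r, hr1, hr2⟩ := Submodule.exists_sub_one_mem_and_smul_eq_zero_of_fg_of_le_smul n ⊤
    (Module.finite_def.mp inferInstance) htop
  have hr : r ∈ Module.annihilator A (M ⧸ N) :=
    Module.mem_annihilator.mpr fun q => hr2 q Submodule.mem_top
  have h1 : (1 : A) ∈ n := by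
    have := n.sub_mem (hle hr) hr1
    simpa using this
  exact hn.ne_top ((Ideal.eq_top_iff_one n).mpr h1)

/-- Surjectivity of the canonical map `A ⊗[Aᴳ] H^m(Eᴳ) → H^m(E)` on the top
cohomology of a complex concentrated in degrees `≤ m` satisfying the
generation-by-invariants condition on fibers. -/
theorem top_cohomology_counit_surjective
    (k : Type*) [Field k] [CharZero k] [IsAlgClosed k]
    (A : Type u) [CommRing A] [Algebra k A] [Algebra.FiniteType k A]
    (G : Type w) [Group G] [Finite G] [MulSemiringAction G A] [SMulCommClass G k A]
    (E : EqvModComplex.{u, w, v} A G)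
    (hproj : ∀ j, Module.Projective A (E.X j))
    (hfin : ∀ j, Module.Finite A (E.X j))
    (m : ℤ) (hconc : ∀ j, m < j → ∀ x : E.X j, x = 0)
    -- for every maximal ideal `n` and every `j`, `H^j(E ⊗[A] A/n)` is
    -- generated by `G_n`-fixed elements
    (hgen : ∀ n : Ideal A, n.IsMaximal → ∀ (j : ℤ) (x : E.X j),
      E.d j (j+1) rfl x ∈ n • (⊤ : Submodule A (E.X (j+1))) →
      x ∈ Submodule.span A {y : E.X j |
        E.d j (j+1) rfl y ∈ n • (⊤ : Submodule A (E.X (j+1))) ∧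
        ∀ g : G, (∀ a : A, g • a ∈ n ↔ a ∈ n) →
          g • y - y ∈ LinearMap.range (E.d (j-1) j (by omega)) ⊔
            n • (⊤ : Submodule A (E.X j))}) :
    Submodule.span A {y : E.X m | ∀ g : G, g • y = y} ⊔
      LinearMap.range (E.d (m-1) m (by omega)) = ⊤ := by
  classical
  cases nonempty_fintype G
  have : Module.Finite A (E.X m) := hfin m
  apply aux_eq_top_of_sup_smul
  intro n hn
  rw [eq_top_iff]
  intro x _
  have hdx : E.d m (m+1) rfl x ∈ n • (⊤ : Submodule A (E.X (m+1))) := by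
    rw [hconc (m+1) (by omega) (E.d m (m+1) rfl x)]
    exact Submodule.zero_mem _
  have hx := hgen n hn m x hdx
  refine Submodule.span_le.mpr ?_ hx
  rintro y ⟨-, hy2⟩
  set P : G → Prop := fun g => ∀ b : A, g • b ∈ n ↔ b ∈ n with hP
  have hP1 : P 1 := fun b => by rw [one_smul]
  have hPmul : ∀ {g h : G}, P g → P h → P (g * h) := by
    intro g h hg hh b
    rw [mul_smul, hg, hh]
  have hPinv : ∀ {g : G}, P g → P g⁻¹ := by
    intro g hg b
    rw [← hg (g⁻¹ • b), smul_inv_smul]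
  -- construct the cutting element `a`
  have hag : ∀ g : G, ¬ P g → ∃ v : A, g • v ∈ n ∧ v - 1 ∈ n := by
    intro g hg
    set J : Ideal A := Ideal.comap (MulSemiringAction.toRingHom G A g) n with hJ
    have hJmem : ∀ b : A, b ∈ J ↔ g • b ∈ n := fun b => Iff.rfl
    have hJmax : J.IsMaximal := Ideal.comap_isMaximal_of_surjective _
      (MulSemiringAction.toRingEquiv G A g).surjective
    have hne : n ≠ J := by
      intro hEq
      exact hg fun b => by rw [← hJmem b, ← hEq]
    have hcop : n ⊔ J = ⊤ := hn.coprime_of_ne hJmax hne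
    have h1 : (1 : A) ∈ n ⊔ J := hcop ▸ Submodule.mem_top
    obtain ⟨u, hu, v, hv, huv⟩ := Submodule.mem_sup.mp h1
    refine ⟨v, (hJmem v).mp hv, ?_⟩
    rw [show v - 1 = -u by linear_combination huv]
    exact n.neg_mem hu
  choose! vv hv1 hv2 using hag
  set a : A := ∏ g ∈ Finset.univ.filter (fun g => ¬ P g), vv g with ha
  have ha1 : a - 1 ∈ n := by
    have hmk : Ideal.Quotient.mk n a = Ideal.Quotient.mk n 1 := by
      rw [ha, map_prod, map_one]
      exact Finset.prod_eq_one fun g hg => by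
        have h := Ideal.Quotient.eq.mpr (hv2 g (Finset.mem_filter.mp hg).2)
        simpa using h
    exact Ideal.Quotient.eq.mp hmk
  have ha2 : ∀ g : G, ¬ P g → g • a ∈ n := by
    intro g hg
    have hmem : g ∈ Finset.univ.filter (fun g => ¬ P g) :=
      Finset.mem_filter.mpr ⟨Finset.mem_univ g, hg⟩
    rw [ha, ← Finset.mul_prod_erase _ _ hmem, smul_mul']
    exact Ideal.mul_mem_right _ n (hv1 g hg)
  set H : Finset G := Finset.univ.filter P with hH
  set c : ℕ := H.card with hc
  have hcpos : 0 < c :=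
    Finset.card_pos.mpr ⟨1, Finset.mem_filter.mpr ⟨Finset.mem_univ 1, hP1⟩⟩
  set R : Submodule A (E.X m) :=
    LinearMap.range (E.d (m-1) m (by omega)) ⊔ n • (⊤ : Submodule A (E.X m)) with hR
  set w : E.X m := ∑ g ∈ H, g • y with hw
  have hw1 : w - (c : A) • y ∈ R := by
    have he : w - (c : A) • y = ∑ g ∈ H, (g • y - y) := by
      rw [Finset.sum_sub_distrib, Finset.sum_const, Nat.cast_smul_eq_nsmul]
    rw [he]
    exact Submodule.sum_mem _ fun g hg => hy2 g (Finset.mem_filter.mp hg).2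
  have hHiff : ∀ (h g : G), P h → (g ∈ H ↔ h * g ∈ H) := by
    intro h g hh
    simp only [hH, Finset.mem_filter, Finset.mem_univ, true_and]
    constructor
    · exact fun hg => hPmul hh hg
    · intro hg
      have := hPmul (hPinv hh) hg
      rwa [inv_mul_cancel_left] at this
  have hw2 : ∀ h : G, P h → h • w = w := by
    intro h hh
    calc h • w = ∑ g ∈ H, (h * g) • y := by
          rw [hw, Finset.smul_sum]
          exact Finset.sum_congr rfl fun g _ => (mul_smul h g y).symm
      _ = ∑ g ∈ H, g • y :=
          Finset.sum_equiv (Equiv.mulLeft h) (fun g => by simpa using hHiff h g hh)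
            (fun g _ => by simp)
    -- done
  set s : E.X m := ∑ g : G, (g • a) • (g • w) with hs
  have hs_inv : ∀ h : G, h • s = s := by
    intro h
    calc h • s = ∑ g : G, ((h * g) • a) • ((h * g) • w) := by
          rw [hs, Finset.smul_sum]
          exact Finset.sum_congr rfl fun g _ => by
            rw [E.equivariant m h (g • a) (g • w), mul_smul, mul_smul]
      _ = ∑ g : G, (g • a) • (g • w) :=
          Finset.sum_equiv (Equiv.mulLeft h) (fun g => by simp) (fun g _ => by simp)
  have hga : ∀ g ∈ H, g • a - 1 ∈ n := by
    intro g hg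
    have hPg : P g := (Finset.mem_filter.mp hg).2
    have h1 : g • (a - 1) ∈ n := (hPg (a - 1)).mpr ha1
    rwa [smul_sub, smul_one] at h1
  have hs2 : s - (c : A) • w ∈ n • (⊤ : Submodule A (E.X m)) := by
    have hsplit : s = (∑ g ∈ H, (g • a) • (g • w))
        + ∑ g ∈ Finset.univ.filter (fun g => ¬ P g), (g • a) • (g • w) :=
      (Finset.sum_filter_add_sum_filter_not _ _ _).symm
    have h1 : ∀ g ∈ H, (g • a) • (g • w) = (g • a) • w := fun g hg => by
      rw [hw2 g (Finset.mem_filter.mp hg).2]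
    have e1 : (∑ g ∈ H, (g • a) • (g • w)) - (c : A) • w = ∑ g ∈ H, (g • a - 1) • w := by
      rw [Finset.sum_congr rfl h1]
      simp only [sub_smul, one_smul]
      rw [Finset.sum_sub_distrib, Finset.sum_const, Nat.cast_smul_eq_nsmul]
    have hfirst : (∑ g ∈ H, (g • a) • (g • w)) - (c : A) • w
        ∈ n • (⊤ : Submodule A (E.X m)) := by
      rw [e1]
      exact Submodule.sum_mem _ fun g hg =>
        Submodule.smul_mem_smul (hga g hg) Submodule.mem_top
    have hsecond : (∑ g ∈ Finset.univ.filter (fun g => ¬ P g), (g • a) • (g • w))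
        ∈ n • (⊤ : Submodule A (E.X m)) :=
      Submodule.sum_mem _ fun g hg =>
        Submodule.smul_mem_smul (ha2 g (Finset.mem_filter.mp hg).2) Submodule.mem_top
    have he : s - (c : A) • w = ((∑ g ∈ H, (g • a) • (g • w)) - (c : A) • w)
        + ∑ g ∈ Finset.univ.filter (fun g => ¬ P g), (g • a) • (g • w) := by
      rw [hsplit]; abel
    rw [he]
    exact Submodule.add_mem _ hfirst hsecond
  -- assemble
  have hck : ((c : k)) ≠ 0 := Nat.cast_ne_zero.mpr hcpos.ne'
  set u : A := algebraMap k A ((c : k)⁻¹ * (c : k)⁻¹) with hu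
  have hu1 : u * ((c : A) * (c : A)) = 1 := by
    rw [hu, show ((c : A)) = algebraMap k A (c : k) from (map_natCast (algebraMap k A) c).symm,
      ← map_mul, ← map_mul, ← map_one (algebraMap k A)]
    congr 1
    field_simp
  have hy_eq : y = u • ((c : A) • ((c : A) • y)) := by
    rw [smul_smul, smul_smul, mul_assoc, hu1, one_smul]
  have hkey : (c : A) • ((c : A) • y) - s ∈ R := by
    have h2 : (c : A) • ((c : A) • y - w) ∈ R := Submodule.smul_mem _ _ (by
      have := Submodule.neg_mem _ hw1
      simpa [neg_sub] using this)
    have h3 : (c : A) • w - s ∈ R := by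
      apply Submodule.mem_sup_right
      have := Submodule.neg_mem _ hs2
      simpa [neg_sub] using this
    have he : (c : A) • ((c : A) • y) - s
        = (c : A) • ((c : A) • y - w) + ((c : A) • w - s) := by
      rw [smul_sub]; abel
    rw [he]
    exact Submodule.add_mem _ h2 h3
  have hsN : s ∈ Submodule.span A {y : E.X m | ∀ g : G, g • y = y} :=
    Submodule.subset_span hs_inv
  have hyrep : y = u • s + u • ((c : A) • ((c : A) • y) - s) := by
    rw [← smul_add, show s + ((c : A) • ((c : A) • y) - s) = (c : A) • ((c : A) • y) by abel]
    exact hy_eq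
  rw [SetLike.mem_coe, hyrep]
  refine Submodule.add_mem _ ?_ ?_
  · exact Submodule.mem_sup_left (Submodule.mem_sup_left (Submodule.smul_mem _ u hsN))
  · have hRle : R ≤ (Submodule.span A {y : E.X m | ∀ g : G, g • y = y}
        ⊔ LinearMap.range (E.d (m-1) m (by omega))) ⊔ n • (⊤ : Submodule A (E.X m)) := by
      rw [hR]
      exact sup_le (le_sup_right.trans le_sup_left) le_sup_right
    exact hRle (Submodule.smul_mem _ u hkey)
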